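/- With w₁ = (e₁+e₂)/2, w₂ = (e₁+e₃)/2, w₃ = (e₂+e₃)/2, the regular tetrahedron T = conv{0, 2w₁, 2w₂, 2w₃} equals the union of the five polytopes T₁ = conv{0, w₁, w₂, w₃}, T₂ = conv{w₁, w₁+w₂, w₁+w₃, 2w₁}, T₃ = conv{w₂, w₁+w₂, w₂+w₃, 2w₂}, T₄ = conv{w₃, w₁+w₃, w₂+w₃, 2w₃}, and Oct = conv{w₁, w₂, w₃, w₁+w₂, w₁+w₃, w₂+w₃}. -/

import Mathlib

/-!
In the coordinates `p • w₁ + q • w₂ + r • w₃` the big tetrahedron is `p, q, r ≥ 0, p + q + r ≤ 2`.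
`T₁` covers the part with `p + q + r ≤ 1` and the corner pieces the parts with `p ≥ 1`, `q ≥ 1`,
`r ≥ 1`, each by explicit barycentric weights. The remaining region `p, q, r ≤ 1 ≤ p + q + r` is
covered by the octahedron, seen as a cross-polytope.
-/

open Set

section

variable {E : Type*} [AddCommGroup E] [Module ℝ E]

theorem sum_smul_mem_convexHull {n : ℕ} {s : Set E} {c : Fin n → ℝ} {p : Fin n → E}
    (hc₀ : ∀ i, 0 ≤ c i) (hc₁ : ∑ i, c i = 1) (hp : ∀ i, p i ∈ s) :
    ∑ i, c i • p i ∈ convexHull ℝ s :=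
  (convex_convexHull ℝ s).sum_mem (fun i _ ↦ hc₀ i) hc₁ fun i _ ↦ subset_convexHull ℝ s (hp i)

theorem mem_convexHull_four_iff {a b c d x : E} :
    x ∈ convexHull ℝ {a, b, c, d} ↔ ∃ α β γ δ : ℝ, 0 ≤ α ∧ 0 ≤ β ∧ 0 ≤ γ ∧ 0 ≤ δ ∧
      α + β + γ + δ = 1 ∧ α • a + β • b + γ • c + δ • d = x := by
  constructor
  · intro hx
    refine convexHull_min (t := {y | ∃ α β γ δ : ℝ, 0 ≤ α ∧ 0 ≤ β ∧ 0 ≤ γ ∧ 0 ≤ δ ∧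
      α + β + γ + δ = 1 ∧ α • a + β • b + γ • c + δ • d = y}) ?_ ?_ hx
    · rintro y (rfl | rfl | rfl | rfl)
      exacts [⟨1, 0, 0, 0, by norm_num⟩, ⟨0, 1, 0, 0, by norm_num⟩, ⟨0, 0, 1, 0, by norm_num⟩,
        ⟨0, 0, 0, 1, by norm_num⟩]
    · rintro _ ⟨α, β, γ, δ, hα, hβ, hγ, hδ, h, rfl⟩ _ ⟨α', β', γ', δ', hα', hβ', hγ', hδ', h', rfl⟩
        s t hs ht hst
      refine ⟨s * α + t * α', s * β + t * β', s * γ + t * γ', s * δ + t * δ',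
        by positivity, by positivity, by positivity, by positivity, ?_, by module⟩
      linear_combination s * h + t * h' + hst
  · rintro ⟨α, β, γ, δ, hα, hβ, hγ, hδ, h, rfl⟩
    have := sum_smul_mem_convexHull (s := {a, b, c, d}) (c := ![α, β, γ, δ]) (p := ![a, b, c, d])
      (by simp [Fin.forall_fin_succ, *]) (by simp [Fin.sum_univ_four, h])
      (by simp [Fin.forall_fin_succ])
    simpa [Fin.sum_univ_four, add_assoc] using this

theorem mem_convexHull_zero_two_smul_iff {a b c x : E} :
    x ∈ convexHull ℝ {0, 2 • a, 2 • b, 2 • c} ↔ ∃ p q r : ℝ, 0 ≤ p ∧ 0 ≤ q ∧ 0 ≤ r ∧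
      p + q + r ≤ 2 ∧ p • a + q • b + r • c = x := by
  rw [mem_convexHull_four_iff]
  constructor
  · rintro ⟨α, β, γ, δ, hα, hβ, hγ, hδ, h, rfl⟩
    exact ⟨2 * β, 2 * γ, 2 * δ, by positivity, by positivity, by positivity, by linarith,
      by module⟩
  · rintro ⟨p, q, r, hp, hq, hr, h, rfl⟩
    exact ⟨1 - (p + q + r) / 2, p / 2, q / 2, r / 2, by linarith, by positivity, by positivity,
      by positivity, by ring, by module⟩

theorem mem_convexHull_crossPolytope (m u v w : E) {s t r : ℝ} (h : |s| + |t| + |r| ≤ 1) :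
    m + s • u + t • v + r • w ∈ convexHull ℝ {m + u, m - u, m + v, m - v, m + w, m - w} := by
  have key := sum_smul_mem_convexHull (s := {m + u, m - u, m + v, m - v, m + w, m - w})
    (c := ![(1 - |t| - |r| + s) / 2, (1 - |t| - |r| - s) / 2, (|t| + t) / 2, (|t| - t) / 2,
      (|r| + r) / 2, (|r| - r) / 2])
    (p := ![m + u, m - u, m + v, m - v, m + w, m - w]) ?_ ?_ (by simp [Fin.forall_fin_succ])
  · convert key using 1
    simp only [Fin.sum_univ_six, Matrix.cons_val]
    module
  · simp only [Fin.forall_fin_succ, Matrix.cons_val_zero, Matrix.cons_val_succ]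
    refine ⟨?_, ?_, ?_, ?_, ?_, ?_, fun i ↦ i.elim0⟩ <;>
      linarith [le_abs_self s, neg_abs_le s, le_abs_self t, neg_abs_le t, le_abs_self r,
        neg_abs_le r]
  · simp only [Fin.sum_univ_six, Matrix.cons_val]
    ring

theorem smul_add_smul_add_smul_mem_octahedron (w₁ w₂ w₃ : E) {p q r : ℝ}
    (hp₀ : 0 ≤ p) (hq₀ : 0 ≤ q) (hr₀ : 0 ≤ r) (hp₁ : p ≤ 1) (hq₁ : q ≤ 1) (hr₁ : r ≤ 1)
    (hsum₁ : 1 ≤ p + q + r) (hsum₂ : p + q + r ≤ 2) :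
    p • w₁ + q • w₂ + r • w₃ ∈ convexHull ℝ {w₁, w₂, w₃, w₁ + w₂, w₁ + w₃, w₂ + w₃} := by
  -- The octahedron is the cross-polytope centred at `(w₁ + w₂ + w₃) / 2` whose pairs of
  -- opposite vertices are `(w₁ + w₂, w₃)`, `(w₁ + w₃, w₂)` and `(w₂ + w₃, w₁)`.
  set m : E := (1 / 2 : ℝ) • (w₁ + w₂ + w₃)
  set u : E := (1 / 2 : ℝ) • (w₁ + w₂ - w₃)
  set v : E := (1 / 2 : ℝ) • (w₁ + w₃ - w₂)
  set w : E := (1 / 2 : ℝ) • (w₂ + w₃ - w₁)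
  have habs : |p + q - 1| + |p + r - 1| + |q + r - 1| ≤ 1 := by
    rcases abs_cases (p + q - 1) with ⟨h₁, -⟩ | ⟨h₁, -⟩ <;>
    rcases abs_cases (p + r - 1) with ⟨h₂, -⟩ | ⟨h₂, -⟩ <;>
    rcases abs_cases (q + r - 1) with ⟨h₃, -⟩ | ⟨h₃, -⟩ <;>
    rw [h₁, h₂, h₃] <;> linarith
  have hvertices : {m + u, m - u, m + v, m - v, m + w, m - w} ⊆
      ({w₁, w₂, w₃, w₁ + w₂, w₁ + w₃, w₂ + w₃} : Set E) := by
    rw [show m + u = w₁ + w₂ by module, show m - u = w₃ by module,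
      show m + v = w₁ + w₃ by module, show m - v = w₂ by module,
      show m + w = w₂ + w₃ by module, show m - w = w₁ by module]
    simp [insert_subset_iff]
  convert convexHull_mono hvertices (mem_convexHull_crossPolytope m u v w habs) using 1
  module

theorem convexHull_zero_two_smul_eq_union (w₁ w₂ w₃ : E) :
    convexHull ℝ {0, 2 • w₁, 2 • w₂, 2 • w₃} =
      convexHull ℝ {0, w₁, w₂, w₃} ∪ convexHull ℝ {w₁, w₁ + w₂, w₁ + w₃, 2 • w₁} ∪
        convexHull ℝ {w₂, w₁ + w₂, w₂ + w₃, 2 • w₂} ∪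
        convexHull ℝ {w₃, w₁ + w₃, w₂ + w₃, 2 • w₃} ∪
        convexHull ℝ {w₁, w₂, w₃, w₁ + w₂, w₁ + w₃, w₂ + w₃} := by
  refine Subset.antisymm (fun x hx ↦ ?_) ?_
  · obtain ⟨p, q, r, hp, hq, hr, hsum, rfl⟩ := mem_convexHull_zero_two_smul_iff.1 hx
    rcases le_or_gt (p + q + r) 1 with hsmall | hlarge
    · refine .inl <| .inl <| .inl <| .inl <| mem_convexHull_four_iff.2
        ⟨1 - (p + q + r), p, q, r, by linarith, hp, hq, hr, by ring, by module⟩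
    rcases le_or_gt 1 p with hp₁ | hp₁
    · refine .inl <| .inl <| .inl <| .inr <| mem_convexHull_four_iff.2
        ⟨2 - (p + q + r), q, r, p - 1, by linarith, hq, hr, by linarith, by ring, by module⟩
    rcases le_or_gt 1 q with hq₁ | hq₁
    · refine .inl <| .inl <| .inr <| mem_convexHull_four_iff.2
        ⟨2 - (p + q + r), p, r, q - 1, by linarith, hp, hr, by linarith, by ring, by module⟩
    rcases le_or_gt 1 r with hr₁ | hr₁
    · refine .inl <| .inr <| mem_convexHull_four_iff.2
        ⟨2 - (p + q + r), p, q, r - 1, by linarith, hp, hq, by linarith, by ring, by module⟩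
    exact .inr <| smul_add_smul_add_smul_mem_octahedron w₁ w₂ w₃ hp hq hr hp₁.le hq₁.le hr₁.le
      hlarge.le hsum
  · have hvertices : {0, w₁, w₂, w₃, w₁ + w₂, w₁ + w₃, w₂ + w₃, 2 • w₁, 2 • w₂, 2 • w₃} ⊆
        convexHull ℝ {0, 2 • w₁, 2 • w₂, 2 • w₃} := by
      simp only [insert_subset_iff, singleton_subset_iff, mem_convexHull_zero_two_smul_iff]
      refine ⟨⟨0, 0, 0, ?_⟩, ⟨1, 0, 0, ?_⟩, ⟨0, 1, 0, ?_⟩, ⟨0, 0, 1, ?_⟩, ⟨1, 1, 0, ?_⟩,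
        ⟨1, 0, 1, ?_⟩, ⟨0, 1, 1, ?_⟩, ⟨2, 0, 0, ?_⟩, ⟨0, 2, 0, ?_⟩, ⟨0, 0, 2, ?_⟩⟩ <;>
        norm_num [two_smul]
    simp only [union_subset_iff]
    refine ⟨⟨⟨⟨?_, ?_⟩, ?_⟩, ?_⟩, ?_⟩ <;>
      exact convexHull_min (subset_trans (by simp [insert_subset_iff]) hvertices)
        (convex_convexHull ℝ _)

end

/-- With `w₁ = (e₁+e₂)/2`, `w₂ = (e₁+e₃)/2`, `w₃ = (e₂+e₃)/2`, the regular
tetrahedron `conv {0, 2w₁, 2w₂, 2w₃}` is the union of the four small tetrahedra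
`T₁, T₂, T₃, T₄` and the octahedron `Oct`. -/
theorem tetrahedron_decomposition :
    let w₁ : EuclideanSpace ℝ (Fin 3) := !₂[1/2, 1/2, 0]
    let w₂ : EuclideanSpace ℝ (Fin 3) := !₂[1/2, 0, 1/2]
    let w₃ : EuclideanSpace ℝ (Fin 3) := !₂[0, 1/2, 1/2]
    let T := convexHull ℝ {(0 : EuclideanSpace ℝ (Fin 3)), 2 • w₁, 2 • w₂, 2 • w₃}
    let T₁ := convexHull ℝ {(0 : EuclideanSpace ℝ (Fin 3)), w₁, w₂, w₃}
    let T₂ := convexHull ℝ {w₁, w₁ + w₂, w₁ + w₃, 2 • w₁}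
    let T₃ := convexHull ℝ {w₂, w₁ + w₂, w₂ + w₃, 2 • w₂}
    let T₄ := convexHull ℝ {w₃, w₁ + w₃, w₂ + w₃, 2 • w₃}
    let Oct := convexHull ℝ {w₁, w₂, w₃, w₁ + w₂, w₁ + w₃, w₂ + w₃}
    T = T₁ ∪ T₂ ∪ T₃ ∪ T₄ ∪ Oct := by
  intro w₁ w₂ w₃ _ _ _ _ _ _
  exact convexHull_zero_two_smul_eq_union w₁ w₂ w₃
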